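/- Let 1/2 < τ ≤ 1 and let γ(t) = f(e^{it}) with f(z) = (z−1)^τ exp((z+1)/(z−1)) (principal branch). Then the arc length integral ∫₀^{ε} |γ'(t)| dt diverges for every ε ∈ (0, 2π); more precisely, |γ'(t)| ≥ c / t^{2−τ} for some constant c > 0 and all sufficiently small t > 0, and ∫₀^ε t^{τ−2} dt = +∞ when τ ≤ 1. -/

import Mathlib

open Complex MeasureTheory

/-!
On the unit circle `exp ((z + 1) / (z - 1))` has modulus one, so with `w = e^{it} - 1` the
logarithmic derivative of `f(z) = (z - 1)^τ exp ((z + 1) / (z - 1))` gives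
`|γ'(t)| = |w|^{τ-2} |τ w - 2|`. Since `Re w ≤ 0` the second factor is at least `2`, and `|w| ≤ t`,
so `|γ'(t)| ≥ 2 t^{τ-2}`. For `τ ≤ 1` the exponent is at most `-1`, so `t^{τ-2}` is not integrable
at `0`.
-/

lemma re_add_one_div_sub_one_of_norm_eq_one {z : ℂ} (hz : ‖z‖ = 1) :
    ((z + 1) / (z - 1)).re = 0 := by
  have h : z.re * z.re + z.im * z.im = 1 := by
    rw [← normSq_apply, ← Complex.sq_norm, hz, one_pow]
  rw [div_re, ← add_div]
  simp only [add_re, sub_re, one_re, add_im, sub_im, one_im, add_zero, sub_zero]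
  exact div_eq_zero_iff.2 (Or.inl (by linear_combination h))

lemma two_le_norm_ofReal_mul_sub_two {τ : ℝ} (hτ : 0 ≤ τ) {w : ℂ} (hw : w.re ≤ 0) :
    2 ≤ ‖(τ : ℂ) * w - 2‖ := by
  have hre : ((τ : ℂ) * w - 2).re ≤ -2 := by
    simp only [sub_re, re_ofReal_mul, re_ofNat]
    linarith [mul_nonpos_of_nonneg_of_nonpos hτ hw]
  calc (2 : ℝ) ≤ |((τ : ℂ) * w - 2).re| := by rw [abs_of_neg (by linarith)]; linarith
    _ ≤ ‖(τ : ℂ) * w - 2‖ := abs_re_le_norm _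

lemma exp_I_mul_sub_one_mem_slitPlane {t : ℝ} (ht : t ∈ Set.Ioo 0 Real.pi) :
    cexp (I * t) - 1 ∈ slitPlane := by
  refine mem_slitPlane_iff.2 (Or.inr (ne_of_gt ?_))
  rw [sub_im, one_im, sub_zero, mul_comm, exp_ofReal_mul_I_im]
  exact Real.sin_pos_of_pos_of_lt_pi ht.1 ht.2

/-- `exp ((z + 1) / (z - 1))` is the atomic singular inner function of the unit disc. -/
noncomputable def cpowMulSingularInner (a z : ℂ) : ℂ :=
  (z - 1) ^ a * exp ((z + 1) / (z - 1))

namespace cpowMulSingularInner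

lemma norm_of_norm_eq_one {τ : ℝ} {z : ℂ} (hz : ‖z‖ = 1) :
    ‖cpowMulSingularInner τ z‖ = ‖z - 1‖ ^ τ := by
  rw [cpowMulSingularInner, norm_mul, norm_cpow_real, norm_exp,
    re_add_one_div_sub_one_of_norm_eq_one hz, Real.exp_zero, mul_one]

lemma hasDerivAt (a : ℂ) {z : ℂ} (hz : z - 1 ∈ slitPlane) :
    HasDerivAt (cpowMulSingularInner a)
      (cpowMulSingularInner a z * (a * (z - 1) - 2) / (z - 1) ^ 2) z := by
  have hz0 : z - 1 ≠ 0 := slitPlane_ne_zero hz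
  have hpow : HasDerivAt (fun w ↦ (w - 1) ^ a) (a * (z - 1) ^ (a - 1)) z := by
    simpa using ((hasDerivAt_id' z).sub_const 1).cpow_const (c := a) hz
  have hq : HasDerivAt (fun w ↦ (w + 1) / (w - 1)) (-2 / (z - 1) ^ 2) z := by
    refine (((hasDerivAt_id' z).add_const 1).fun_div ((hasDerivAt_id' z).sub_const 1) hz0
      ).congr_deriv ?_
    ring
  refine (hpow.fun_mul hq.cexp).congr_deriv ?_
  rw [cpowMulSingularInner, cpow_sub _ _ hz0, cpow_one]
  field_simp
  ring

lemma hasDerivAt_comp_exp_I_mul (a : ℂ) {t : ℝ} (ht : cexp (I * t) - 1 ∈ slitPlane) :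
    HasDerivAt (fun s : ℝ ↦ cpowMulSingularInner a (cexp (I * s)))
      (cpowMulSingularInner a (cexp (I * t)) * (a * (cexp (I * t) - 1) - 2) /
        (cexp (I * t) - 1) ^ 2 * (cexp (I * t) * I)) t := by
  have hexp : HasDerivAt (fun u : ℂ ↦ cexp (I * u)) (cexp (I * t) * I) t := by
    simpa using ((hasDerivAt_id (t : ℂ)).const_mul I).cexp
  exact ((hasDerivAt a ht).comp (t : ℂ) hexp).comp_ofReal

lemma two_mul_rpow_le_norm_deriv_comp_exp_I_mul {τ : ℝ} (hτ0 : 0 ≤ τ) (hτ2 : τ ≤ 2) {t : ℝ}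
    (ht : t ∈ Set.Ioo 0 Real.pi) :
    2 * t ^ (τ - 2) ≤ ‖deriv (fun s : ℝ ↦ cpowMulSingularInner τ (cexp (I * s))) t‖ := by
  set z := cexp (I * t)
  have hz : ‖z‖ = 1 := norm_exp_I_mul_ofReal t
  have hslit := exp_I_mul_sub_one_mem_slitPlane ht
  have hw0 : 0 < ‖z - 1‖ := norm_pos_iff.2 (slitPlane_ne_zero hslit)
  have hwt : ‖z - 1‖ ≤ t := by
    simpa [abs_of_pos ht.1] using Real.norm_exp_I_mul_ofReal_sub_one_le (x := t)
  have hre : (z - 1).re ≤ 0 := by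
    rw [sub_re, one_re, sub_nonpos, ← hz]; exact re_le_norm z
  rw [(hasDerivAt_comp_exp_I_mul τ hslit).deriv, norm_mul, norm_div, norm_mul, norm_pow,
    norm_mul, norm_of_norm_eq_one hz, hz, norm_I, mul_one, mul_one, mul_div_right_comm,
    ← Real.rpow_sub_natCast hw0.ne']
  push_cast
  rw [mul_comm]
  exact mul_le_mul (Real.rpow_le_rpow_of_nonpos hw0 hwt (by linarith))
    (two_le_norm_ofReal_mul_sub_two hτ0 hre) zero_le_two (by positivity)

end cpowMulSingularInner

lemma lintegral_rpow_Ioo_eq_top {r : ℝ} (hr : r ≤ -1) {ε : ℝ} (hε : 0 < ε) :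
    ∫⁻ t in Set.Ioo 0 ε, ENNReal.ofReal (t ^ r) = ⊤ := by
  by_contra h
  have hnonneg : 0 ≤ᵐ[volume.restrict (Set.Ioo 0 ε)] fun t : ℝ ↦ t ^ r := by
    filter_upwards [ae_restrict_mem measurableSet_Ioo] with t ht
    exact Real.rpow_nonneg ht.1.le r
  have hint := (lintegral_ofReal_ne_top_iff_integrable
    (measurable_id.pow_const r).aestronglyMeasurable hnonneg).1 h
  linarith [(intervalIntegral.integrableOn_Ioo_rpow_iff hε).1 hint]

lemma lintegral_Ioo_eq_top_of_const_mul_rpow_le {g : ℝ → ℝ} {c r δ : ℝ} (hc : 0 < c)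
    (hr : r ≤ -1) (hδ : 0 < δ) (hg : ∀ t ∈ Set.Ioo 0 δ, c * t ^ r ≤ g t) {ε : ℝ} (hε : 0 < ε) :
    ∫⁻ t in Set.Ioo 0 ε, ENNReal.ofReal (g t) = ⊤ := by
  set η := min ε δ
  have hη : 0 < η := lt_min hε hδ
  refine top_le_iff.1 ?_
  calc ⊤ = ENNReal.ofReal c * ∫⁻ t in Set.Ioo 0 η, ENNReal.ofReal (t ^ r) := by
        rw [lintegral_rpow_Ioo_eq_top hr hη, ENNReal.mul_top (by simpa using hc)]
    _ = ∫⁻ t in Set.Ioo 0 η, ENNReal.ofReal (c * t ^ r) := by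
        rw [← lintegral_const_mul' _ _ ENNReal.ofReal_ne_top]
        simp only [ENNReal.ofReal_mul hc.le]
    _ ≤ ∫⁻ t in Set.Ioo 0 η, ENNReal.ofReal (g t) :=
        setLIntegral_mono' measurableSet_Ioo fun t ht ↦
          ENNReal.ofReal_le_ofReal (hg t ⟨ht.1, ht.2.trans_le (min_le_right ε δ)⟩)
    _ ≤ ∫⁻ t in Set.Ioo 0 ε, ENNReal.ofReal (g t) :=
        lintegral_mono_set (Set.Ioo_subset_Ioo_right (min_le_left ε δ))

theorem stmt11 (τ : ℝ) (hτ : 1 / 2 < τ) (hτ1 : τ ≤ 1)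
    (γ : ℝ → ℂ)
    (hγ : ∀ t : ℝ, γ t = (Complex.exp (Complex.I * t) - 1) ^ (τ : ℂ) *
      Complex.exp ((Complex.exp (Complex.I * t) + 1) / (Complex.exp (Complex.I * t) - 1))) :
    (∃ c > (0 : ℝ), ∃ ε₀ > (0 : ℝ), ∀ t ∈ Set.Ioo 0 ε₀,
      c / t ^ (2 - τ) ≤ ‖deriv γ t‖) ∧
    (∀ ε ∈ Set.Ioo (0 : ℝ) (2 * Real.pi),
      ∫⁻ t in Set.Ioo (0 : ℝ) ε, ENNReal.ofReal (‖deriv γ t‖) = ⊤) ∧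
    (∀ ε > (0 : ℝ), ∫⁻ t in Set.Ioo (0 : ℝ) ε, ENNReal.ofReal (t ^ (τ - 2)) = ⊤) := by
  have hγ' : γ = fun s : ℝ ↦ cpowMulSingularInner τ (cexp (I * s)) := funext hγ
  have hr : τ - 2 ≤ -1 := by linarith
  have hbound : ∀ t ∈ Set.Ioo 0 Real.pi, 2 * t ^ (τ - 2) ≤ ‖deriv γ t‖ := fun t ht ↦
    hγ' ▸ cpowMulSingularInner.two_mul_rpow_le_norm_deriv_comp_exp_I_mul
      (by linarith) (by linarith) ht
  refine ⟨⟨2, two_pos, Real.pi, Real.pi_pos, fun t ht ↦ ?_⟩,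
    fun ε hε ↦ lintegral_Ioo_eq_top_of_const_mul_rpow_le two_pos hr Real.pi_pos hbound hε.1,
    fun ε hε ↦ lintegral_rpow_Ioo_eq_top hr hε⟩
  rw [div_eq_mul_inv, ← Real.rpow_neg ht.1.le, neg_sub]
  exact hbound t ht
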